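/- arXiv:0908.2587 — 2 statements merged into one kernel-verified Lean document; each statement's English description precedes it below -/
import Mathlib

section
/- Among all holomorphic universal covering maps of the punctured disk, κ₀ and its rotations maximize the modulus of the derivative at the origin: if p : Δ → Δ* is a holomorphic covering map of Δ onto the punctured disk Δ*, then |p′(0)| ≤ 2/e, with equality if and only if p(z) = e^{iα₁} κ₀(e^{iα} z) for some real α, α₁. -/
/-- The universal covering map `κ₀(z) = exp((z-1)/(z+1))` of `Δ` onto `Δ*`. -/
noncomputable def kappa0 (z : ℂ) : ℂ :=
  Complex.exp ((z - 1) / (z + 1))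

/-!
Write `p = exp ∘ g` with `g` holomorphic on `Δ` with values in the left half-plane. The Schwarz
lemma, transported to the half-plane by `w ↦ (w - g 0) / (w + conj (g 0))`, gives
`|g'(0)| ≤ 2t` with `t = -Re g(0)`, hence `|p'(0)| = e^{-t} |g'(0)| ≤ 2t e^{-t} ≤ 2/e`.
Equality forces `t = 1` and equality in the Schwarz lemma, so this Möbius image of `g` is a
rotation, which makes `p` a rotated `κ₀`.
-/

open Metric Set Complex ComplexConjugate

theorem Real.mul_exp_neg_eq_exp_neg_one_iff {y : ℝ} :
    y * Real.exp (-y) = Real.exp (-1) ↔ y = 1 := by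
  refine ⟨fun h => ?_, fun h => by rw [h, one_mul]⟩
  by_contra hy
  have hlt : y < Real.exp (y - 1) := by linarith [Real.add_one_lt_exp (sub_ne_zero.mpr hy)]
  have := mul_lt_mul_of_pos_right hlt (Real.exp_pos (-y))
  rw [← Real.exp_add, show y - 1 + -y = -1 by ring, h] at this
  exact lt_irrefl _ this

theorem exists_differentiableOn_cexp_eq_of_ne_zero {f : ℂ → ℂ} {c : ℂ} {r : ℝ}
    (hf : DifferentiableOn ℂ f (ball c r)) (hf₀ : ∀ z ∈ ball c r, f z ≠ 0) :
    ∃ g : ℂ → ℂ, DifferentiableOn ℂ g (ball c r) ∧ ∀ z ∈ ball c r, cexp (g z) = f z := by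
  obtain ⟨G, hG⟩ := ((hf.deriv isOpen_ball).div hf hf₀).isExactOn_ball
  have hGd : DifferentiableOn ℂ G (ball c r) := fun z hz =>
    (hG z hz).differentiableAt.differentiableWithinAt
  have hconst : ∃ a, ∀ z ∈ ball c r, f z * cexp (-G z) = a := by
    refine isOpen_ball.exists_is_const_of_deriv_eq_zero (convex_ball c r).isPreconnected
      (hf.mul hGd.neg.cexp) fun z hz => ?_
    have hfz : HasDerivAt f (deriv f z) z :=
      (hf.differentiableAt (isOpen_ball.mem_nhds hz)).hasDerivAt
    refine (hfz.mul (hG z hz).neg.cexp).deriv.trans ?_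
    simp only [Pi.div_apply, Pi.zero_apply]
    field_simp [hf₀ z hz]
    ring
  obtain ⟨a, ha⟩ := hconst
  refine ⟨fun z => G z + log a, hGd.add_const _, fun z hz => ?_⟩
  have ha₀ : a ≠ 0 := ha z hz ▸ mul_ne_zero (hf₀ z hz) (Complex.exp_ne_zero _)
  rw [exp_add, exp_log ha₀, ← ha z hz, exp_neg]
  field_simp

noncomputable def leftHalfPlaneToDisc (w₀ w : ℂ) : ℂ := (w - w₀) / (w + conj w₀)

section LeftHalfPlane

variable {w w₀ : ℂ}

theorem add_conj_ne_zero_of_re_neg (hw : w.re < 0) (hw₀ : w₀.re < 0) : w + conj w₀ ≠ 0 := by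
  intro h
  have := congrArg re h
  simp only [add_re, conj_re, zero_re] at this
  linarith

theorem norm_sub_lt_norm_add_conj (hw : w.re < 0) (hw₀ : w₀.re < 0) :
    ‖w - w₀‖ < ‖w + conj w₀‖ := by
  rw [← sq_lt_sq₀ (norm_nonneg _) (norm_nonneg _), Complex.sq_norm, Complex.sq_norm,
    normSq_apply, normSq_apply]
  simp only [sub_re, sub_im, add_re, add_im, conj_re, conj_im]
  nlinarith [mul_pos (neg_pos.mpr hw) (neg_pos.mpr hw₀)]

theorem norm_leftHalfPlaneToDisc_lt_one (hw : w.re < 0) (hw₀ : w₀.re < 0) :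
    ‖leftHalfPlaneToDisc w₀ w‖ < 1 := by
  rw [leftHalfPlaneToDisc, norm_div,
    div_lt_one (norm_pos_iff.mpr (add_conj_ne_zero_of_re_neg hw hw₀))]
  exact norm_sub_lt_norm_add_conj hw hw₀

theorem leftHalfPlaneToDisc_self : leftHalfPlaneToDisc w₀ w₀ = 0 := by
  simp [leftHalfPlaneToDisc]

theorem hasDerivAt_leftHalfPlaneToDisc (hw₀ : w₀.re ≠ 0) :
    HasDerivAt (leftHalfPlaneToDisc w₀) (1 / (2 * w₀.re)) w₀ := by
  have hden : w₀ + conj w₀ ≠ 0 := by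
    rw [add_conj]; exact_mod_cast mul_ne_zero two_ne_zero hw₀
  refine (((hasDerivAt_id w₀).sub_const w₀).div ((hasDerivAt_id w₀).add_const _)
    hden).congr_deriv ?_
  simp only [id, sub_self, zero_mul, sub_zero, one_mul, add_conj] at hden ⊢
  push_cast at hden ⊢
  field_simp

theorem eq_of_leftHalfPlaneToDisc_eq {u : ℂ} (h : leftHalfPlaneToDisc w₀ w = u)
    (hw : w + conj w₀ ≠ 0) (hu : u ≠ 1) :
    w = w₀.im * I + w₀.re * ((1 + u) / (1 - u)) := by
  rw [leftHalfPlaneToDisc, div_eq_iff hw] at h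
  have hu' : 1 - u ≠ 0 := sub_ne_zero.mpr hu.symm
  have hw₀ : w₀ = w₀.re + w₀.im * I := (re_add_im w₀).symm
  have hconj : conj w₀ = w₀.re - w₀.im * I := by
    apply Complex.ext <;> simp
  rw [hconj] at h
  field_simp
  linear_combination h + hw₀

end LeftHalfPlane

section SchwarzLeftHalfPlane

variable {g : ℂ → ℂ}

theorem DifferentiableOn.leftHalfPlaneToDisc_comp {s : Set ℂ} {w₀ : ℂ}
    (hg : DifferentiableOn ℂ g s) (hg_re : ∀ z ∈ s, (g z).re < 0) (hw₀ : w₀.re < 0) :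
    DifferentiableOn ℂ (leftHalfPlaneToDisc w₀ ∘ g) s :=
  (hg.sub_const w₀).div (hg.add_const _) fun z hz => add_conj_ne_zero_of_re_neg (hg_re z hz) hw₀

theorem mapsTo_leftHalfPlaneToDisc_comp {s : Set ℂ} {z₀ : ℂ} (hg_re : ∀ z ∈ s, (g z).re < 0)
    (hz₀ : z₀ ∈ s) :
    MapsTo (leftHalfPlaneToDisc (g z₀) ∘ g) s
      (closedBall ((leftHalfPlaneToDisc (g z₀) ∘ g) z₀) 1) := fun z hz => by
  simpa [leftHalfPlaneToDisc_self] using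
    (norm_leftHalfPlaneToDisc_lt_one (hg_re z hz) (hg_re z₀ hz₀)).le

theorem norm_deriv_leftHalfPlaneToDisc_comp {z₀ : ℂ} (hg : DifferentiableAt ℂ g z₀)
    (hg_re : (g z₀).re < 0) :
    ‖deriv (leftHalfPlaneToDisc (g z₀) ∘ g) z₀‖ = ‖deriv g z₀‖ / (2 * -(g z₀).re) := by
  rw [((hasDerivAt_leftHalfPlaneToDisc hg_re.ne).comp z₀ hg.hasDerivAt).deriv, norm_mul,
    norm_div, norm_one, norm_mul, Complex.norm_two, norm_real, Real.norm_of_nonpos hg_re.le]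
  ring

theorem norm_deriv_le_of_re_neg (hg : DifferentiableOn ℂ g (ball 0 1))
    (hg_re : ∀ z ∈ ball (0 : ℂ) 1, (g z).re < 0) : ‖deriv g 0‖ ≤ 2 * -(g 0).re := by
  have h₀ : (0 : ℂ) ∈ ball (0 : ℂ) 1 := mem_ball_self one_pos
  have hschwarz := norm_deriv_le_div_of_mapsTo_ball
    (hg.leftHalfPlaneToDisc_comp hg_re (hg_re 0 h₀)) (mapsTo_leftHalfPlaneToDisc_comp hg_re h₀)
    one_pos
  rwa [norm_deriv_leftHalfPlaneToDisc_comp (hg.differentiableAt (isOpen_ball.mem_nhds h₀))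
    (hg_re 0 h₀), div_one, div_le_one (by linarith [hg_re 0 h₀])] at hschwarz

theorem exists_eq_of_norm_deriv_eq_of_re_neg (hg : DifferentiableOn ℂ g (ball 0 1))
    (hg_re : ∀ z ∈ ball (0 : ℂ) 1, (g z).re < 0) (h : ‖deriv g 0‖ = 2 * -(g 0).re) :
    ∃ a : ℂ, ‖a‖ = 1 ∧
      ∀ z ∈ ball (0 : ℂ) 1, g z = (g 0).im * I + (g 0).re * ((1 + a * z) / (1 - a * z)) := by
  have h₀ : (0 : ℂ) ∈ ball (0 : ℂ) 1 := mem_ball_self one_pos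
  have hderiv := norm_deriv_leftHalfPlaneToDisc_comp
    (hg.differentiableAt (isOpen_ball.mem_nhds h₀)) (hg_re 0 h₀)
  rw [h, div_self (by linarith [hg_re 0 h₀])] at hderiv
  obtain ⟨a, ha, hφ⟩ := affine_of_mapsTo_ball_of_exists_norm_dslope_eq_div'
    (hg.leftHalfPlaneToDisc_comp hg_re (hg_re 0 h₀)) (mapsTo_leftHalfPlaneToDisc_comp hg_re h₀)
    ⟨0, h₀, by simpa [dslope_same] using hderiv⟩
  rw [div_one] at ha
  refine ⟨a, ha, fun z hz => eq_of_leftHalfPlaneToDisc_eq ?_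
    (add_conj_ne_zero_of_re_neg (hg_re z hz) (hg_re 0 h₀)) fun h1 => ?_⟩
  · simpa [leftHalfPlaneToDisc_self, mul_comm] using hφ hz
  · have haz : ‖a * z‖ < 1 := by rw [norm_mul, ha, one_mul]; exact mem_ball_zero_iff.mp hz
    rw [h1, norm_one] at haz
    exact lt_irrefl _ haz

end SchwarzLeftHalfPlane

theorem hasDerivAt_kappa0 {z : ℂ} (hz : z + 1 ≠ 0) :
    HasDerivAt kappa0 (kappa0 z * (2 / (z + 1) ^ 2)) z := by
  refine (((hasDerivAt_id z).sub_const 1).div ((hasDerivAt_id z).add_const 1)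
    hz).cexp.congr_deriv ?_
  simp only [kappa0, id, Pi.div_apply]
  field_simp
  ring

theorem norm_deriv_rotate_kappa0_zero (α α₁ : ℝ) :
    ‖deriv (fun z => cexp (I * α₁) * kappa0 (cexp (I * α) * z)) 0‖ = 2 / Real.exp 1 := by
  have hk := (hasDerivAt_kappa0 (z := cexp (I * α) * 0) (by simp)).comp (0 : ℂ)
    ((hasDerivAt_id (0 : ℂ)).const_mul (cexp (I * α)))
  refine (congrArg norm (hk.const_mul (cexp (I * α₁))).deriv).trans ?_
  simp [kappa0, Complex.norm_exp, Real.exp_neg]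
  ring

theorem cexp_sub_eq_rotate_kappa0 {a : ℂ} (ha : ‖a‖ = 1) (s : ℝ) (z : ℂ) :
    cexp (s * I - (1 + a * z) / (1 - a * z)) =
      cexp (I * s) * kappa0 (cexp (I * (-a).arg) * z) := by
  have hrot : cexp (I * (-a).arg) = -a := by
    simpa [ha, mul_comm] using norm_mul_exp_arg_mul_I (-a)
  rw [kappa0, hrot, sub_eq_add_neg, exp_add, mul_comm (s : ℂ), ← neg_div]
  congr 2
  ring

theorem norm_deriv_eq_of_eqOn_cexp {p g : ℂ → ℂ} {s : Set ℂ} {z₀ : ℂ} (hs : s ∈ nhds z₀)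
    (hg : DifferentiableAt ℂ g z₀) (hpg : ∀ z ∈ s, cexp (g z) = p z) :
    ‖deriv p z₀‖ = Real.exp (g z₀).re * ‖deriv g z₀‖ := by
  have hpg_nhds : p =ᶠ[nhds z₀] fun z => cexp (g z) :=
    Filter.eventually_of_mem hs fun z hz => (hpg z hz).symm
  rw [hpg_nhds.deriv_eq, hg.hasDerivAt.cexp.deriv, norm_mul, Complex.norm_exp]

theorem covering_map_deriv_max_general
    (p : ℂ → ℂ)
    (hp : DifferentiableOn ℂ p (Metric.ball (0 : ℂ) 1))
    (hmaps : Set.MapsTo p (Metric.ball (0 : ℂ) 1) (Metric.ball (0 : ℂ) 1 \ {0})) :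
    ‖deriv p 0‖ ≤ 2 / Real.exp 1 ∧
      (‖deriv p 0‖ = 2 / Real.exp 1 ↔
        ∃ α α₁ : ℝ, ∀ z ∈ Metric.ball (0 : ℂ) 1,
          p z = Complex.exp (Complex.I * (α₁ : ℂ)) *
            kappa0 (Complex.exp (Complex.I * (α : ℂ)) * z)) := by
  have h₀ : (0 : ℂ) ∈ ball (0 : ℂ) 1 := mem_ball_self one_pos
  obtain ⟨g, hg, hpg⟩ := exists_differentiableOn_cexp_eq_of_ne_zero hp fun z hz => (hmaps hz).2
  have hg_re : ∀ z ∈ ball (0 : ℂ) 1, (g z).re < 0 := fun z hz => by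
    simpa [← hpg z hz, Complex.norm_exp] using (hmaps hz).1
  have hp_deriv := norm_deriv_eq_of_eqOn_cexp (isOpen_ball.mem_nhds h₀)
    (hg.differentiableAt (isOpen_ball.mem_nhds h₀)) hpg
  rw [← neg_neg (g 0).re] at hp_deriv
  set t := -(g 0).re with ht
  have hbound : ‖deriv p 0‖ ≤ 2 * (t * Real.exp (-t)) := calc
    _ = Real.exp (-t) * ‖deriv g 0‖ := hp_deriv
    _ ≤ Real.exp (-t) * (2 * t) := by gcongr; exact norm_deriv_le_of_re_neg hg hg_re
    _ = 2 * (t * Real.exp (-t)) := by ring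
  have htmax := Real.mul_exp_neg_le_exp_neg_one t
  have h2e : 2 / Real.exp 1 = 2 * Real.exp (-1) := by rw [Real.exp_neg]; ring
  refine ⟨by linarith, fun heq => ?_, fun ⟨α, α₁, hform⟩ => ?_⟩
  · have ht1 : t = 1 := Real.mul_exp_neg_eq_exp_neg_one_iff.mp (by linarith)
    have hg_eq : ‖deriv g 0‖ = 2 * t :=
      mul_left_cancel₀ (Real.exp_pos (-t)).ne' (by rw [← hp_deriv, heq, h2e, ht1]; ring)
    obtain ⟨a, ha, hg_form⟩ := exists_eq_of_norm_deriv_eq_of_re_neg hg hg_re hg_eq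
    have hre : (g 0).re = -1 := by linarith
    refine ⟨(-a).arg, (g 0).im, fun z hz => ?_⟩
    rw [← hpg z hz, hg_form z hz, ← cexp_sub_eq_rotate_kappa0 ha, hre]
    congr 1
    push_cast
    ring
  · have hp_rot : p =ᶠ[nhds 0] fun z => cexp (I * α₁) * kappa0 (cexp (I * α) * z) :=
      Filter.eventually_of_mem (isOpen_ball.mem_nhds h₀) hform
    rw [hp_rot.deriv_eq, norm_deriv_rotate_kappa0_zero]

/-- Among all holomorphic covering maps `p : Δ → Δ*` of the punctured disk,
`κ₀` and its rotations maximize `|p′(0)|`: one has `|p′(0)| ≤ 2/e`, with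
equality iff `p(z) = e^{iα₁} κ₀(e^{iα} z)` for some real `α, α₁`. -/
theorem covering_map_deriv_max
    (p : ℂ → ℂ)
    (hp : DifferentiableOn ℂ p (Metric.ball (0 : ℂ) 1))
    (hmaps : Set.MapsTo p (Metric.ball (0 : ℂ) 1) (Metric.ball (0 : ℂ) 1 \ {0}))
    (hsurj : Set.SurjOn p (Metric.ball (0 : ℂ) 1) (Metric.ball (0 : ℂ) 1 \ {0}))
    (hcov : IsCoveringMap
      (Set.MapsTo.restrict p (Metric.ball (0 : ℂ) 1) (Metric.ball (0 : ℂ) 1 \ {0}) hmaps)) :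
    ‖deriv p 0‖ ≤ 2 / Real.exp 1 ∧
      (‖deriv p 0‖ = 2 / Real.exp 1 ↔
        ∃ α α₁ : ℝ, ∀ z ∈ Metric.ball (0 : ℂ) 1,
          p z = Complex.exp (Complex.I * (α₁ : ℂ)) *
            kappa0 (Complex.exp (Complex.I * (α : ℂ)) * z)) :=
  covering_map_deriv_max_general p hp hmaps
end

section
/- For each integer n ≥ 1, the set {f ∈ B₁⁰ : c_n(f) ≠ 0} is open and dense in B₁⁰ with respect to the sup-norm topology of H^∞; equivalently, the zero-set Z = {f ∈ B₁⁰ : c_n(f) = 0} is nowhere dense in B₁⁰. -/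
/-! Cauchy's estimate `|c_n(h)| ≤ sup_Δ |h|` makes `c_n` 1-Lipschitz for the sup norm, which
gives openness. For density, if `c_n(f) = 0` then `f + η zⁿ` has `c_n = η`, and for small `η > 0`
it stays in `B₁⁰`: its sup is at most `sup_Δ |f| + η < 1`, and it has no zeros on the open set
`{|η zⁿ| < |f|}`, which contains the closed disk once `η < min |f|` there. -/

/-- The `n`-th Taylor coefficient of `f` at `0`. -/
noncomputable def taylorCoeff (f : ℂ → ℂ) (n : ℕ) : ℂ :=
  iteratedDeriv n f 0 / n.factorial

/-- The class `B₁⁰` of functions holomorphic and nonvanishing on an open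
neighborhood of the closed unit disk with `sup_Δ |f| < 1`. -/
def B10 : Set (ℂ → ℂ) :=
  {f | ∃ U : Set ℂ, IsOpen U ∧ Metric.closedBall (0 : ℂ) 1 ⊆ U ∧
    DifferentiableOn ℂ f U ∧ (∀ z ∈ U, f z ≠ 0) ∧
    ∃ m < (1 : ℝ), ∀ z ∈ Metric.ball (0 : ℂ) 1, ‖f z‖ ≤ m}

open Metric

section TaylorCoeff

variable {f g : ℂ → ℂ} {n : ℕ}

lemma taylorCoeff_add (hf : ContDiffAt ℂ n f 0) (hg : ContDiffAt ℂ n g 0) :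
    taylorCoeff (fun z ↦ f z + g z) n = taylorCoeff f n + taylorCoeff g n := by
  rw [taylorCoeff, iteratedDeriv_fun_add hf hg, add_div, taylorCoeff, taylorCoeff]

lemma taylorCoeff_sub (hf : ContDiffAt ℂ n f 0) (hg : ContDiffAt ℂ n g 0) :
    taylorCoeff (fun z ↦ f z - g z) n = taylorCoeff f n - taylorCoeff g n := by
  rw [taylorCoeff, iteratedDeriv_fun_sub hf hg, sub_div, taylorCoeff, taylorCoeff]

lemma taylorCoeff_const_mul (c : ℂ) (f : ℂ → ℂ) (n : ℕ) :
    taylorCoeff (fun z ↦ c * f z) n = c * taylorCoeff f n := by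
  simpa only [taylorCoeff, smul_eq_mul, mul_div_assoc] using
    congrArg (· / (n.factorial : ℂ)) (iteratedDeriv_fun_const_smul_field (x := 0) c f (n := n))

lemma taylorCoeff_pow_self (n : ℕ) : taylorCoeff (fun z ↦ z ^ n) n = 1 := by
  have hprod : ∏ i ∈ Finset.range n, ((n : ℂ) - i) = n.descFactorial n := by
    rw [Nat.descFactorial_eq_prod_range, Nat.cast_prod]
    exact Finset.prod_congr rfl fun i hi ↦ (Nat.cast_sub (Finset.mem_range.1 hi).le).symm
  rw [taylorCoeff, iteratedDeriv_eq_iterate, iter_deriv_pow, Nat.sub_self, pow_zero, mul_one,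
    hprod, Nat.descFactorial_self, div_self (Nat.cast_ne_zero.2 n.factorial_ne_zero)]

lemma norm_taylorCoeff_le_of_forall_mem_ball_norm_le {C : ℝ} (hf : DiffContOnCl ℂ f (ball 0 1))
    (hC : ∀ z ∈ ball (0 : ℂ) 1, ‖f z‖ ≤ C) (n : ℕ) : ‖taylorCoeff f n‖ ≤ C := by
  have hsphere : ∀ z ∈ sphere (0 : ℂ) 1, ‖f z‖ ≤ C := fun z hz ↦
    le_on_closure hC hf.continuousOn.norm continuousOn_const
      (by rw [closure_ball _ one_ne_zero]; exact sphere_subset_closedBall hz)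
  have hcauchy := Complex.norm_iteratedDeriv_le_of_forall_mem_sphere_norm_le n one_pos hf hsphere
  rw [taylorCoeff, norm_div, Complex.norm_natCast, div_le_iff₀ (by positivity)]
  simpa [mul_comm] using hcauchy

end TaylorCoeff

section B10

variable {f g : ℂ → ℂ}

lemma diffContOnCl_of_mem_B10 (hf : f ∈ B10) : DiffContOnCl ℂ f (ball 0 1) := by
  obtain ⟨U, -, hU, hfU, -⟩ := hf
  exact hfU.diffContOnCl_ball hU

lemma contDiffAt_of_mem_B10 (hf : f ∈ B10) (n : ℕ) : ContDiffAt ℂ n f 0 := by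
  obtain ⟨U, hUo, hU, hfU, -⟩ := hf
  exact (hfU.analyticAt (hUo.mem_nhds (hU (mem_closedBall_self zero_le_one)))).contDiffAt

lemma norm_taylorCoeff_sub_le_of_mem_B10 (hf : f ∈ B10) (hg : g ∈ B10) {C : ℝ}
    (hC : ∀ z ∈ ball (0 : ℂ) 1, ‖g z - f z‖ ≤ C) (n : ℕ) :
    ‖taylorCoeff g n - taylorCoeff f n‖ ≤ C := by
  rw [← taylorCoeff_sub (contDiffAt_of_mem_B10 hg n) (contDiffAt_of_mem_B10 hf n)]
  exact norm_taylorCoeff_le_of_forall_mem_ball_norm_le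
    ((diffContOnCl_of_mem_B10 hg).sub (diffContOnCl_of_mem_B10 hf)) hC n

lemma exists_pos_le_norm_of_mem_B10 (hf : f ∈ B10) :
    ∃ a > 0, ∀ z ∈ closedBall (0 : ℂ) 1, a ≤ ‖f z‖ := by
  obtain ⟨U, -, hU, hfU, hf0, -⟩ := hf
  obtain ⟨z₀, hz₀, hmin⟩ := (isCompact_closedBall (0 : ℂ) 1).exists_isMinOn
    (nonempty_closedBall.2 zero_le_one) (hfU.continuousOn.mono hU).norm
  exact ⟨‖f z₀‖, norm_pos_iff.2 (hf0 z₀ (hU hz₀)), fun z hz ↦ hmin hz⟩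

lemma exists_pos_forall_add_mem_B10 (hf : f ∈ B10) :
    ∃ δ > 0, ∀ h : ℂ → ℂ, Differentiable ℂ h →
      (∀ z ∈ closedBall (0 : ℂ) 1, ‖h z‖ ≤ δ) → (fun z ↦ f z + h z) ∈ B10 := by
  obtain ⟨a, ha, hfa⟩ := exists_pos_le_norm_of_mem_B10 hf
  obtain ⟨U, hUo, hU, hfU, -, m, hm1, hfm⟩ := hf
  obtain ⟨δ, hδ, hδam⟩ := exists_between (lt_min ha (sub_pos.2 hm1))
  rw [lt_min_iff] at hδam
  refine ⟨δ, hδ, fun h hh hhδ ↦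
    ⟨U ∩ {z | ‖h z‖ < ‖f z‖}, ?_, ?_, ?_, ?_, m + δ, by linarith, ?_⟩⟩
  · exact (hfU.continuousOn.norm.prodMk hh.continuous.norm.continuousOn).isOpen_inter_preimage
      hUo (isOpen_lt continuous_snd continuous_fst)
  · exact fun z hz ↦ ⟨hU hz, (hhδ z hz).trans_lt (hδam.1.trans_le (hfa z hz))⟩
  · exact (hfU.mono Set.inter_subset_left).add hh.differentiableOn
  · rintro z ⟨-, hz⟩ hfh
    rw [Set.mem_ofPred_eq, eq_neg_of_add_eq_zero_left hfh, norm_neg] at hz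
    exact lt_irrefl _ hz
  · exact fun z hz ↦ (norm_add_le _ _).trans
      (add_le_add (hfm z hz) (hhδ z (ball_subset_closedBall hz)))

end B10

theorem coeff_nonzero_open_dense_general (n : ℕ) :
    (∀ f ∈ B10, taylorCoeff f n ≠ 0 →
      ∃ ε > (0 : ℝ), ∀ g ∈ B10,
        (∀ z ∈ Metric.ball (0 : ℂ) 1, ‖g z - f z‖ < ε) →
        taylorCoeff g n ≠ 0) ∧
    (∀ f ∈ B10, ∀ ε > (0 : ℝ), ∃ g ∈ B10,
      (∀ z ∈ Metric.ball (0 : ℂ) 1, ‖g z - f z‖ < ε) ∧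
      taylorCoeff g n ≠ 0) := by
  refine ⟨fun f hf hcf ↦
    ⟨‖taylorCoeff f n‖ / 2, by positivity, fun g hg hgf hcg ↦ ?_⟩, fun f hf ε hε ↦ ?_⟩
  · have hclose := norm_taylorCoeff_sub_le_of_mem_B10 hf hg (fun z hz ↦ (hgf z hz).le) n
    rw [hcg, zero_sub, norm_neg] at hclose
    linarith [norm_pos_iff.2 hcf]
  rcases ne_or_eq (taylorCoeff f n) 0 with hcf | hcf
  · exact ⟨f, hf, fun z _ ↦ by simpa using hε, hcf⟩
  obtain ⟨δ, hδ, hfδ⟩ := exists_pos_forall_add_mem_B10 hf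
  set η := min δ (ε / 2)
  have hη : 0 < η := lt_min hδ (half_pos hε)
  have hbump : ∀ z ∈ closedBall (0 : ℂ) 1, ‖(η : ℂ) * z ^ n‖ ≤ η := fun z hz ↦ by
    rw [norm_mul, Complex.norm_real, Real.norm_of_nonneg hη.le, norm_pow]
    exact mul_le_of_le_one_right hη.le
      (pow_le_one₀ (norm_nonneg _) (mem_closedBall_zero_iff.1 hz))
  refine ⟨fun z ↦ f z + η * z ^ n,
    hfδ _ (by fun_prop) fun z hz ↦ (hbump z hz).trans (min_le_left _ _), fun z hz ↦ ?_, ?_⟩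
  · rw [add_sub_cancel_left]
    exact (hbump z (ball_subset_closedBall hz)).trans_lt
      ((min_le_right _ _).trans_lt (half_lt_self hε))
  · rw [taylorCoeff_add (contDiffAt_of_mem_B10 hf n) (by fun_prop), hcf, zero_add,
      taylorCoeff_const_mul, taylorCoeff_pow_self, mul_one]
    exact Complex.ofReal_ne_zero.2 hη.ne'

/-- For each `n ≥ 1`, the set `{f ∈ B₁⁰ : c_n(f) ≠ 0}` is open and dense in
`B₁⁰` for the sup-norm topology of `H^∞`; equivalently, the zero-set
`{f ∈ B₁⁰ : c_n(f) = 0}` is nowhere dense in `B₁⁰`. -/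
theorem coeff_nonzero_open_dense (n : ℕ) (hn : 1 ≤ n) :
    (∀ f ∈ B10, taylorCoeff f n ≠ 0 →
      ∃ ε > (0 : ℝ), ∀ g ∈ B10,
        (∀ z ∈ Metric.ball (0 : ℂ) 1, ‖g z - f z‖ < ε) →
        taylorCoeff g n ≠ 0) ∧
    (∀ f ∈ B10, ∀ ε > (0 : ℝ), ∃ g ∈ B10,
      (∀ z ∈ Metric.ball (0 : ℂ) 1, ‖g z - f z‖ < ε) ∧
      taylorCoeff g n ≠ 0) :=
  coeff_nonzero_open_dense_general n
end
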